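/- An element x of the group ring Z/2Z[Q8] is a unit if and only if the sum of its coefficients equals 1 in Z/2Z; and x is a zero divisor (or zero) if and only if the sum of its coefficients equals 0. -/

import Mathlib

/-!
Let `z = a 2` be the central involution of `Q₈` and `ε` the augmentation. Modulo the ideal
`(1 + z)`, the algebra `𝔽₂[Q₈]` is commutative of characteristic `2` and every group element
squares to `1`, so `x ^ 2 ≡ ε(x) ^ 2`. As `1 + z` is central with `(1 + z) ^ 2 = 1 + z ^ 2 = 0`,
every element of that ideal squares to zero, whence `x ^ 4 = ε(x) ^ 4 = ε(x)`. So `x` is a unit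
when `ε(x) = 1`, and nilpotent, hence a zero divisor, when `ε(x) = 0`.
-/

namespace QuaternionGroup

theorem commute_a_n {n : ℕ} (g : QuaternionGroup n) : Commute (a n) g := by
  have h2n : (n + n : ZMod (2 * n)) = 0 := by rw [← Nat.cast_add, ← two_mul, ZMod.natCast_self]
  cases g with
  | a i => simp only [Commute, SemiconjBy, a_mul_a, add_comm]
  | xa i =>
    simp only [Commute, SemiconjBy, a_mul_xa, xa_mul_a, xa.injEq]
    rw [sub_eq_add_neg, neg_eq_of_add_eq_zero_left h2n]

theorem a_n_sq {n : ℕ} : (a n : QuaternionGroup n) ^ 2 = 1 := by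
  rw [sq, a_mul_a, ← Nat.cast_add, ← two_mul, ZMod.natCast_self, a_zero]

theorem sq_eq_one_or_eq_a_two (g : QuaternionGroup 2) : g ^ 2 = 1 ∨ g ^ 2 = a 2 := by
  revert g
  decide

theorem mul_comm_or_eq_mul_mul_a_two (g h : QuaternionGroup 2) :
    h * g = g * h ∨ h * g = g * h * a 2 := by
  revert g h
  decide

end QuaternionGroup

theorem IsNilpotent.exists_ne_zero_mul_eq_zero {R : Type*} [MonoidWithZero R] [Nontrivial R]
    {x : R} (hx : IsNilpotent x) : ∃ y ≠ 0, x * y = 0 := by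
  refine ⟨x ^ (nilpotencyClass x - 1), pow_pred_nilpotencyClass hx, ?_⟩
  rw [← pow_succ', Nat.sub_add_cancel (pos_nilpotencyClass_iff.mpr hx), pow_nilpotencyClass hx]

namespace MonoidAlgebra

instance charP {k M : Type*} [Semiring k] [Monoid M] (p : ℕ) [CharP k p] : CharP k[M] p :=
  charP_of_injective_ringHom (f := singleOneRingHom) single_right_injective p

section CentralInvolution

variable {k G : Type*} [CommRing k] [CharP k 2] [Group G] {z : G}

local notation "ε" => lift k k G 1

theorem mul_add_mul_mem_span_one_add_of (hcomm : ∀ g h : G, h * g = g * h ∨ h * g = g * h * z)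
    (x y : k[G]) : x * y + y * x ∈ Ideal.span {1 + of k G z} := by
  induction x using induction_linear generalizing y with
  | zero => simp
  | add x₁ x₂ h₁ h₂ =>
    rw [add_mul, mul_add, add_add_add_comm]
    exact add_mem (h₁ y) (h₂ y)
  | single g a =>
    induction y using induction_linear with
    | zero => simp
    | add y₁ y₂ h₁ h₂ =>
      rw [add_mul, mul_add, add_add_add_comm]
      exact add_mem h₁ h₂
    | single h b =>
      rw [single_mul_single, single_mul_single, mul_comm b a]
      rcases hcomm g h with hgh | hgh
      · rw [hgh, ← single_add, CharTwo.add_self_eq_zero, single_zero]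
        exact zero_mem _
      · refine Ideal.mem_span_singleton'.mpr ⟨single (g * h) (a * b), ?_⟩
        rw [hgh, mul_add, mul_one, of_apply, single_mul_single, mul_one]

theorem sq_sub_algebraMap_mem_span_one_add_of (hsq : ∀ g : G, g ^ 2 = 1 ∨ g ^ 2 = z)
    (hcomm : ∀ g h : G, h * g = g * h ∨ h * g = g * h * z) (x : k[G]) :
    x ^ 2 - algebraMap k k[G] (ε x ^ 2) ∈ Ideal.span {1 + of k G z} := by
  induction x using induction_linear with
  | zero => simp
  | add x y hx hy =>
    have hxy := mul_add_mul_mem_span_one_add_of hcomm x y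
    convert add_mem (add_mem hx hy) hxy using 1
    rw [map_add, CharTwo.add_sq, map_add]
    noncomm_ring
  | single g a =>
    rw [single_pow, lift_single, MonoidHom.one_apply, smul_eq_mul, mul_one, coe_algebraMap,
      Function.comp_apply, Algebra.algebraMap_self, RingHom.id_apply]
    rcases hsq g with hg | hg
    · rw [hg, sub_self]
      exact zero_mem _
    · refine Ideal.mem_span_singleton'.mpr ⟨single 1 (a ^ 2), ?_⟩
      rw [hg, CharTwo.sub_eq_add, mul_add, mul_one, of_apply, single_mul_single, one_mul, mul_one,
        add_comm]

theorem sq_eq_zero_of_mem_span_one_add_of (hz : ∀ g, Commute z g) (hz2 : z ^ 2 = 1)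
    {y : k[G]} (hy : y ∈ Ideal.span {1 + of k G z}) : y ^ 2 = 0 := by
  obtain ⟨w, rfl⟩ := Ideal.mem_span_singleton'.mp hy
  have hc : Commute (1 + of k G z) w := (Commute.one_left w).add_left (of_commute hz w)
  have hsq : (1 + of k G z) ^ 2 = 0 := by
    rw [(Commute.one_left _).add_sq, CharTwo.two_eq_zero (R := k[G]), zero_mul, zero_mul,
      add_zero, one_pow, ← map_pow, hz2, map_one, CharTwo.add_self_eq_zero]
  rw [hc.symm.mul_pow, hsq, mul_zero]

theorem pow_four_eq_algebraMap (hz : ∀ g, Commute z g) (hz2 : z ^ 2 = 1)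
    (hsq : ∀ g : G, g ^ 2 = 1 ∨ g ^ 2 = z)
    (hcomm : ∀ g h : G, h * g = g * h ∨ h * g = g * h * z)
    (x : k[G]) : x ^ 4 = algebraMap k k[G] (ε x ^ 4) := by
  set y := x ^ 2 - algebraMap k k[G] (ε x ^ 2)
  have hy : y ^ 2 = 0 :=
    sq_eq_zero_of_mem_span_one_add_of hz hz2 (sq_sub_algebraMap_mem_span_one_add_of hsq hcomm x)
  calc x ^ 4 = (algebraMap k k[G] (ε x ^ 2) + y) ^ 2 := by rw [add_sub_cancel, ← pow_mul]
    _ = algebraMap k k[G] (ε x ^ 4) := by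
      rw [(Algebra.commute_algebraMap_left _ y).add_sq, hy, CharTwo.two_eq_zero (R := k[G]),
        zero_mul, zero_mul, add_zero, add_zero, ← map_pow, ← pow_mul]

end CentralInvolution

theorem pow_four_eq_sum_coeff_smul_one (x : (ZMod 2)[QuaternionGroup 2]) :
    x ^ 4 = (∑ g, x.coeff g) • 1 := by
  rw [pow_four_eq_algebraMap QuaternionGroup.commute_a_n QuaternionGroup.a_n_sq
    QuaternionGroup.sq_eq_one_or_eq_a_two QuaternionGroup.mul_comm_or_eq_mul_mul_a_two x,
    Algebra.algebraMap_eq_smul_one, lift_apply, Finsupp.sum_fintype _ _ (by simp)]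
  simp only [MonoidHom.one_apply, smul_eq_mul, mul_one]
  rw [show 4 = 2 ^ 2 from rfl, ZMod.pow_card_pow]

end MonoidAlgebra

theorem z2_q8_unit_iff_zero_divisor_iff
    (x : MonoidAlgebra (ZMod 2) (QuaternionGroup 2)) :
    (IsUnit x ↔ ∑ g : QuaternionGroup 2, x.coeff g = 1) ∧
    ((x = 0 ∨ ∃ y : MonoidAlgebra (ZMod 2) (QuaternionGroup 2), y ≠ 0 ∧ x * y = 0) ↔
      ∑ g : QuaternionGroup 2, x.coeff g = 0) := by
  have hx4 := MonoidAlgebra.pow_four_eq_sum_coeff_smul_one x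
  rcases (by decide : ∀ a : ZMod 2, a = 0 ∨ a = 1) (∑ g, x.coeff g) with h | h <;>
    rw [h] at hx4 ⊢
  · rw [zero_smul] at hx4
    have hnil : IsNilpotent x := ⟨4, hx4⟩
    exact ⟨iff_of_false hnil.not_isUnit zero_ne_one,
      iff_of_true (Or.inr hnil.exists_ne_zero_mul_eq_zero) rfl⟩
  · rw [one_smul] at hx4
    have hunit : IsUnit x := .of_pow_eq_one hx4 four_ne_zero
    refine ⟨iff_of_true hunit rfl, iff_of_false ?_ one_ne_zero⟩
    rintro (rfl | ⟨y, hy, hxy⟩)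
    · exact not_isUnit_zero hunit
    · exact hy (hunit.mul_right_eq_zero.mp hxy)
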